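/- Let f(t) = (1−λ) t + λ m Σᵢ₌₁^I Kᵢ² · max{1 − t/cᵢ, 0} on [t_min, t_max] with 0 < t_min ≤ t_max, λ ∈ (0,1), m > 0, Kᵢ > 0, cᵢ > 0, and suppose the breakpoints are ordered c₁ ≥ c₂ ≥ … ≥ c_I. Let i₁ be the largest index with c_{i₁} ≥ t_min (i₁ = I if c_I ≥ t_min). If (1 − λ) − λ m Σᵢ₌₁^{i₁} Kᵢ²/cᵢ ≥ 0, then t_min is a minimizer of f on [t_min, t_max]. -/

import Mathlib

theorem tmin_optimal {I : ℕ} (lam m tmin tmax : ℝ) (K c : Fin I → ℝ)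
    (hlam : lam ∈ Set.Ioo (0 : ℝ) 1) (hm : 0 < m)
    (hK : ∀ i, 0 < K i) (hc : ∀ i, 0 < c i)
    (htmin : 0 < tmin) (ht : tmin ≤ tmax)
    (hord : ∀ i j : Fin I, i ≤ j → c j ≤ c i)
    (i₁ : Fin I) (hi₁ : tmin ≤ c i₁)
    (hi₁max : ∀ j : Fin I, i₁ < j → c j < tmin)
    (hcase : 0 ≤ (1 - lam) - lam * m * ∑ i ∈ Finset.univ.filter (· ≤ i₁), (K i) ^ 2 / c i) :
    ∀ s ∈ Set.Icc tmin tmax,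
      (1 - lam) * tmin + lam * m * ∑ i, (K i) ^ 2 * max (1 - tmin / c i) 0 ≤
        (1 - lam) * s + lam * m * ∑ i, (K i) ^ 2 * max (1 - s / c i) 0 := by
  obtain ⟨hl0, hl1⟩ := hlam
  rintro s ⟨hs1, hs2⟩
  have hd : 0 ≤ s - tmin := by linarith
  have key : ∀ i : Fin I, (K i) ^ 2 * max (1 - tmin / c i) 0 ≤
      (K i) ^ 2 * max (1 - s / c i) 0 +
        (if i ≤ i₁ then (K i) ^ 2 / c i * (s - tmin) else 0) := by
    intro i
    have hcpos := hc i
    have hK2 : (0:ℝ) ≤ (K i) ^ 2 := sq_nonneg _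
    by_cases h : i ≤ i₁
    · simp only [if_pos h]
      have hci : tmin ≤ c i := le_trans hi₁ (hord i i₁ h)
      have h1 : max (1 - tmin / c i) 0 = 1 - tmin / c i :=
        max_eq_left (by rw [sub_nonneg]; exact div_le_one_of_le₀ hci hcpos.le)
      have h2 : 1 - s / c i ≤ max (1 - s / c i) 0 := le_max_left _ _
      have heq : (K i) ^ 2 * (1 - tmin / c i) =
          (K i) ^ 2 * (1 - s / c i) + (K i) ^ 2 / c i * (s - tmin) := by
        field_simp; ring
      have := mul_le_mul_of_nonneg_left h2 hK2
      rw [h1]; linarith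
    · simp only [if_neg h]
      have hlt : i₁ < i := lt_of_not_ge h
      have hci : c i < tmin := hi₁max i hlt
      have h1 : max (1 - tmin / c i) 0 = 0 :=
        max_eq_right (by rw [sub_nonpos]; exact (one_le_div hcpos).2 hci.le)
      have h2 : max (1 - s / c i) 0 = 0 :=
        max_eq_right (by rw [sub_nonpos]; exact (one_le_div hcpos).2 (by linarith))
      rw [h1, h2]; simp
  have hsum := Finset.sum_le_sum (fun i (_ : i ∈ Finset.univ) => key i)
  rw [Finset.sum_add_distrib, ← Finset.sum_filter] at hsum
  have hfil : ∑ i ∈ Finset.univ.filter (· ≤ i₁), (K i) ^ 2 / c i * (s - tmin) =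
      (∑ i ∈ Finset.univ.filter (· ≤ i₁), (K i) ^ 2 / c i) * (s - tmin) := by
    rw [Finset.sum_mul]
  rw [hfil] at hsum
  set A := ∑ i ∈ Finset.univ.filter (· ≤ i₁), (K i) ^ 2 / c i with hA
  have hlm : 0 < lam * m := mul_pos hl0 hm
  nlinarith [mul_le_mul_of_nonneg_left hsum hlm.le,
    mul_le_mul_of_nonneg_right (show lam * m * A ≤ 1 - lam by linarith) hd]
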